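/- Suppose a differentiable flow t ↦ ϕ_t(x) on [0,∞) with values in [0,∞) satisfies the differential inequality ∂_t ϕ_t(x) ≤ 2Aϕ_t(x) + R − Sϕ_t(x)² for all t ≥ 0. Then for every t ≥ 0 and all x, y ≥ 0, ϕ_t(x) ≤ φ_t(y) + exp(2∫₀^t (A − Sφ_s(y)) ds)·(x − y), where φ denotes the Riccati semigroup solving ∂_t φ_t(y) = 2Aφ_t(y) + R − Sφ_t(y)², φ_0(y) = y. -/

import Mathlib

/-!
The gap `u = ϕ_t(x) - φ_t(y)` satisfies a linear differential inequality: writing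
`P(z) = 2Az + R - Sz²`, one has `P(f) - P(g) = 2(A - Sg)(f - g) - S(f - g)² ≤ 2(A - Sg)(f - g)`,
so `u' ≤ 2(A - Sφ_t(y)) u`, and the variable-coefficient Grönwall inequality (monotonicity of
`exp(-∫ c) u`) gives the bound. That the closed form `phi` solves the Riccati equation on
`[0, ∞)` is checked directly, using the factorisation `P(z) = -S (z - wplus)(z - wminus)` and the
positivity of its denominator for `t, y ≥ 0`.
-/

noncomputable def lam (A R S : ℝ) : ℝ := 2 * Real.sqrt (A ^ 2 + R * S)

noncomputable def wplus (A R S : ℝ) : ℝ := (A + lam A R S / 2) / S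

noncomputable def wminus (A R S : ℝ) : ℝ := (A - lam A R S / 2) / S

/-- The closed-form Riccati semigroup `φ_t(x)`. -/
noncomputable def phi (A R S t x : ℝ) : ℝ :=
  wplus A R S +
    (x - wplus A R S) * ((wplus A R S - wminus A R S) * Real.exp (-(lam A R S) * t)) /
      ((wplus A R S - wminus A R S) * Real.exp (-(lam A R S) * t) +
        (x - wminus A R S) * (1 - Real.exp (-(lam A R S) * t)))

/-- `ϖ = 1 - ϖ₊/ϖ₋`. -/
noncomputable def vpi (A R S : ℝ) : ℝ := 1 - wplus A R S / wminus A R S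

open Set

theorem le_exp_integral_mul_of_hasDerivAt_le {u u' c : ℝ → ℝ} {a b : ℝ} (hab : a ≤ b)
    (hc : ContinuousOn c (Icc a b)) (hu : ContinuousOn u (Icc a b))
    (hu' : ∀ s ∈ Ioo a b, HasDerivAt u (u' s) s) (hle : ∀ s ∈ Ioo a b, u' s ≤ c s * u s) :
    u b ≤ Real.exp (∫ s in a..b, c s) * u a := by
  set I : ℝ → ℝ := fun s => ∫ r in a..s, c r
  have hI : ContinuousOn I (Icc a b) := by
    have hint : MeasureTheory.IntegrableOn c (uIcc a b) := by
      simpa only [uIcc_of_le hab] using hc.integrableOn_Icc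
    simpa only [uIcc_of_le hab] using intervalIntegral.continuousOn_primitive_interval hint
  have hI' : ∀ s ∈ Ioo a b, HasDerivAt I (c s) s := fun s hs =>
    intervalIntegral.integral_hasDerivAt_right
      ((hc.mono (Icc_subset_Icc le_rfl hs.2.le)).intervalIntegrable_of_Icc hs.1.le)
      ((hc.mono Ioo_subset_Icc_self).stronglyMeasurableAtFilter isOpen_Ioo s hs)
      (hc.continuousAt (Icc_mem_nhds hs.1 hs.2))
  have hanti : AntitoneOn (fun s => Real.exp (-I s) * u s) (Icc a b) := by
    refine antitoneOn_of_hasDerivWithinAt_nonpos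
      (f' := fun s => Real.exp (-I s) * (u' s - c s * u s)) (convex_Icc a b) ((hI.neg.rexp).mul hu) (fun s hs => ?_) (fun s hs => ?_)
    all_goals rw [interior_Icc] at hs
    · have hd : HasDerivAt (fun s => Real.exp (-I s) * u s)
          (Real.exp (-I s) * -c s * u s + Real.exp (-I s) * u' s) s :=
        ((hI' s hs).neg.exp).mul (hu' s hs)
      exact (hd.congr_deriv (by ring)).hasDerivWithinAt
    · exact mul_nonpos_of_nonneg_of_nonpos (Real.exp_pos _).le (sub_nonpos.2 (hle s hs))
  have hmono : Real.exp (-I b) * u b ≤ Real.exp (-I a) * u a :=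
    hanti (left_mem_Icc.2 hab) (right_mem_Icc.2 hab) hab
  rw [show I a = 0 from intervalIntegral.integral_same, neg_zero, Real.exp_zero, one_mul] at hmono
  calc u b = Real.exp (I b) * (Real.exp (-I b) * u b) := by
        rw [← mul_assoc, ← Real.exp_add, add_neg_cancel, Real.exp_zero, one_mul]
    _ ≤ Real.exp (I b) * u a := by gcongr

section RiccatiSemigroup

variable {A R S : ℝ}

lemma lam_pos (hR : 0 < R) (hS : 0 < S) : 0 < lam A R S := by
  unfold lam; positivity

lemma mul_wplus_sub_wminus (hS : S ≠ 0) : S * (wplus A R S - wminus A R S) = lam A R S := by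
  unfold wplus wminus; field_simp; ring

lemma wplus_sub_wminus_pos (hR : 0 < R) (hS : 0 < S) : 0 < wplus A R S - wminus A R S :=
  pos_of_mul_pos_right ((mul_wplus_sub_wminus hS.ne').symm ▸ lam_pos hR hS) hS.le

lemma wminus_neg (hR : 0 < R) (hS : 0 < S) : wminus A R S < 0 := by
  have hA : A < Real.sqrt (A ^ 2 + R * S) :=
    calc A ≤ |A| := le_abs_self A
      _ = Real.sqrt (A ^ 2) := (Real.sqrt_sq_eq_abs A).symm
      _ < Real.sqrt (A ^ 2 + R * S) := Real.sqrt_lt_sqrt (sq_nonneg A) (by linarith [mul_pos hR hS])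
  unfold wminus lam
  exact div_neg_of_neg_of_pos (by linarith) hS

lemma riccati_field_eq (hS : S ≠ 0) (hdisc : 0 ≤ A ^ 2 + R * S) (z : ℝ) :
    2 * A * z + R - S * z ^ 2 = -S * (z - wplus A R S) * (z - wminus A R S) := by
  have hlam : lam A R S ^ 2 = 4 * (A ^ 2 + R * S) := by
    rw [lam, mul_pow, Real.sq_sqrt hdisc]; ring
  unfold wplus wminus
  field_simp
  linear_combination -hlam

lemma phi_zero (hR : 0 < R) (hS : 0 < S) (y : ℝ) : phi A R S 0 y = y := by
  have hD := (wplus_sub_wminus_pos (A := A) hR hS).ne'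
  simp only [phi, mul_zero, Real.exp_zero, mul_one, sub_self, add_zero]
  field_simp
  ring

lemma phi_denom_pos (hR : 0 < R) (hS : 0 < S) {t y : ℝ} (ht : 0 ≤ t) (hy : 0 ≤ y) :
    0 < (wplus A R S - wminus A R S) * Real.exp (-(lam A R S) * t) +
      (y - wminus A R S) * (1 - Real.exp (-(lam A R S) * t)) := by
  have hE : Real.exp (-(lam A R S) * t) ≤ 1 :=
    Real.exp_le_one_iff.2 (mul_nonpos_of_nonpos_of_nonneg (neg_nonpos.2 (lam_pos hR hS).le) ht)
  have hy' : 0 < y - wminus A R S := by linarith [wminus_neg (A := A) hR hS]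
  exact add_pos_of_pos_of_nonneg (mul_pos (wplus_sub_wminus_pos hR hS) (Real.exp_pos _))
    (mul_nonneg hy'.le (sub_nonneg.2 hE))

lemma hasDerivAt_phi (hR : 0 < R) (hS : 0 < S) {t y : ℝ} (ht : 0 ≤ t) (hy : 0 ≤ y) :
    HasDerivAt (fun s => phi A R S s y)
      (2 * A * phi A R S t y + R - S * phi A R S t y ^ 2) t := by
  have hden := (phi_denom_pos (A := A) hR hS ht hy).ne'
  rw [riccati_field_eq hS.ne' (by positivity)]
  unfold phi at *
  rw [← mul_wplus_sub_wminus hS.ne'] at *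
  generalize wplus A R S = p, wminus A R S = m at *
  have hE : HasDerivAt (fun s => Real.exp (-(S * (p - m)) * s))
      (Real.exp (-(S * (p - m)) * t) * -(S * (p - m))) t := by
    simpa using ((hasDerivAt_id t).const_mul (-(S * (p - m)))).exp
  have hq := (((hE.const_mul (p - m)).const_mul (y - p)).fun_div
    ((hE.const_mul (p - m)).fun_add ((hE.const_sub 1).const_mul (y - m))) hden).const_add p
  refine hq.congr_deriv ?_
  generalize Real.exp (-(S * (p - m)) * t) = E at hden ⊢
  field_simp
  ring

end RiccatiSemigroup

theorem riccati_comparison_lemma_general (A R S : ℝ) (hR : 0 < R) (hS : 0 < S)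
    (f : ℝ → ℝ) (x y : ℝ) (hy : 0 ≤ y)
    (hf0 : f 0 = x)
    (hfdiff : ∀ t : ℝ, 0 ≤ t → DifferentiableAt ℝ f t)
    (hfineq : ∀ t : ℝ, 0 ≤ t → deriv f t ≤ 2 * A * f t + R - S * (f t) ^ 2) :
    ∀ t : ℝ, 0 ≤ t →
      f t ≤ phi A R S t y +
        Real.exp (2 * ∫ s in (0 : ℝ)..t, (A - S * phi A R S s y)) * (x - y) := by
  intro t ht
  have hφ : ∀ s, 0 ≤ s → HasDerivAt (fun s => phi A R S s y)
      (2 * A * phi A R S s y + R - S * phi A R S s y ^ 2) s :=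
    fun s hs => hasDerivAt_phi hR hS hs hy
  have hgap := le_exp_integral_mul_of_hasDerivAt_le (u := fun s => f s - phi A R S s y)
    (u' := fun s => deriv f s - (2 * A * phi A R S s y + R - S * phi A R S s y ^ 2))
    (c := fun s => 2 * (A - S * phi A R S s y)) ht
    (fun s hs => ((continuousAt_const.sub
      (continuousAt_const.mul (hφ s hs.1).continuousAt)).const_mul 2).continuousWithinAt)
    (fun s hs => ((hfdiff s hs.1).continuousAt.sub (hφ s hs.1).continuousAt).continuousWithinAt)
    (fun s hs => (hfdiff s hs.1.le).hasDerivAt.sub (hφ s hs.1.le))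
    (fun s hs => by
      linear_combination hfineq s hs.1.le + S * sq_nonneg (f s - phi A R S s y))
  simp only [intervalIntegral.integral_const_mul, hf0, phi_zero hR hS] at hgap
  linarith

theorem riccati_comparison_lemma (A R S : ℝ) (hR : 0 < R) (hS : 0 < S)
    (f : ℝ → ℝ) (x y : ℝ) (hx : 0 ≤ x) (hy : 0 ≤ y)
    (hf0 : f 0 = x)
    (hfpos : ∀ t : ℝ, 0 ≤ t → 0 ≤ f t)
    (hfdiff : ∀ t : ℝ, 0 ≤ t → DifferentiableAt ℝ f t)
    (hfineq : ∀ t : ℝ, 0 ≤ t → deriv f t ≤ 2 * A * f t + R - S * (f t) ^ 2) :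
    ∀ t : ℝ, 0 ≤ t →
      f t ≤ phi A R S t y +
        Real.exp (2 * ∫ s in (0 : ℝ)..t, (A - S * phi A R S s y)) * (x - y) :=
  riccati_comparison_lemma_general A R S hR hS f x y hy hf0 hfdiff hfineq
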